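/- arXiv:2511.11977 — 3 statements merged into one kernel-verified Lean document; each statement's English description precedes it below -/
import Mathlib

section
/- Define a(n) = 2^{Σ_{k ∈ bin(n)} k} and define recursively a_2(1) = 0, a_2(0) = 0, and for n = 2^R + m with 0 ≤ m < 2^R: a_2(n) = 2^R·a_2(m) + binom(2^{R-1}, 2)·a(m) if m < 2^{R-1}, and a_2(n) = 2^R·a_2(m) + (binom(2^{R-1}, 3) + 2^{R-1})·a(m)/2^{R-1} if 2^{R-1} ≤ m < 2^R. Then for any sparse even n, a_2(n) = (a(n)/8)·(n - 2ν(n)). -/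
/-- The set of positions of 1s in the binary expansion of `n`. -/
def binSet (n : ℕ) : Finset ℕ := (Finset.range (n + 1)).filter (fun i => n.testBit i)

/-- `a(n) = 2^{Σ_{k ∈ bin(n)} k}`, the number of odd-dimensional partitions of `n`. -/
def aOdd (n : ℕ) : ℕ := 2 ^ (∑ k ∈ binSet n, k)

/-- `n` is sparse if its binary expansion has no two consecutive 1s. -/
def Sparse (n : ℕ) : Prop := ∀ i, ¬(n.testBit i ∧ n.testBit (i + 1))

/-!
A sparse even `n > 0` is `2^R + m` with `R ≥ 1` and `m` sparse and even; since bit `R - 1` of `n`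
vanishes, `m < 2^(R-1)`, so only the first case of the recursion ever applies. Passing from `m`
to `n` multiplies `a` by `2^R`, raises `ν` by one and adds `2^R - 2` to `n - 2ν`, and with
`2·binom(2^(R-1), 2) = 2^(R-1)(2^(R-1) - 1)` the closed form propagates by strong induction.
The bound `2ν(n) ≤ n`, proved by the same induction, makes the truncated subtraction harmless.
-/

lemma mem_binSet {n i : ℕ} : i ∈ binSet n ↔ n.testBit i := by
  simp only [binSet, Finset.mem_filter, Finset.mem_range, and_iff_right_iff_imp]
  intro h
  have := Nat.ge_two_pow_of_testBit h
  have := Nat.lt_two_pow_self (n := i)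
  omega

lemma testBit_two_pow_add {R m : ℕ} (hm : m < 2 ^ R) (i : ℕ) :
    (2 ^ R + m).testBit i = (decide (i = R) || m.testBit i) := by
  rcases lt_trichotomy i R with h | rfl | h
  · simp [Nat.testBit_two_pow_add_gt h, h.ne]
  · simp [Nat.testBit_two_pow_add_eq, Nat.testBit_lt_two_pow hm]
  · have hR : 2 ^ (R + 1) ≤ 2 ^ i := Nat.pow_le_pow_right two_pos h
    have hn : 2 ^ R + m < 2 ^ i := by rw [pow_succ] at hR; omega
    simp [Nat.testBit_lt_two_pow hn, Nat.testBit_lt_two_pow (by omega : m < 2 ^ i), h.ne']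

lemma notMem_binSet_of_lt_two_pow {R m : ℕ} (hm : m < 2 ^ R) : R ∉ binSet m := by
  simp [mem_binSet, Nat.testBit_lt_two_pow hm]

lemma binSet_two_pow_add {R m : ℕ} (hm : m < 2 ^ R) :
    binSet (2 ^ R + m) = insert R (binSet m) := by
  ext i
  simp [mem_binSet, testBit_two_pow_add hm]

lemma aOdd_two_pow_add {R m : ℕ} (hm : m < 2 ^ R) : aOdd (2 ^ R + m) = 2 ^ R * aOdd m := by
  rw [aOdd, aOdd, binSet_two_pow_add hm, Finset.sum_insert (notMem_binSet_of_lt_two_pow hm),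
    pow_add]

lemma card_binSet_two_pow_add {R m : ℕ} (hm : m < 2 ^ R) :
    (binSet (2 ^ R + m)).card = (binSet m).card + 1 := by
  rw [binSet_two_pow_add hm, Finset.card_insert_of_notMem (notMem_binSet_of_lt_two_pow hm)]

lemma exists_eq_two_pow_add {n : ℕ} (hn : n ≠ 0) : ∃ R m, m < 2 ^ R ∧ n = 2 ^ R + m := by
  have hle := Nat.pow_log_le_self 2 hn
  have hlt := Nat.lt_pow_succ_log_self one_lt_two n
  rw [Nat.pow_succ] at hlt
  exact ⟨Nat.log 2 n, n - 2 ^ Nat.log 2 n, by omega, by omega⟩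

namespace Sparse

variable {R m : ℕ}

lemma of_two_pow_add (hs : Sparse (2 ^ R + m)) (hm : m < 2 ^ R) : Sparse m :=
  fun i ⟨hi, hi'⟩ => hs i (by simp [testBit_two_pow_add hm, hi, hi'])

lemma lt_two_pow_pred (hs : Sparse (2 ^ R + m)) (hm : m < 2 ^ R) : m < 2 ^ (R - 1) := by
  by_contra! hge
  have hR : R - 1 + 1 = R := by
    rcases R with _ | R
    · simp at hge hm; omega
    · rfl
  obtain ⟨k, rfl⟩ := Nat.exists_eq_add_of_le hge
  have hk : k < 2 ^ (R - 1) := by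
    have : 2 ^ R = 2 ^ (R - 1) * 2 := by rw [← pow_succ, hR]
    omega
  apply hs (R - 1)
  rw [hR, testBit_two_pow_add hm, testBit_two_pow_add hm, testBit_two_pow_add hk]
  simp

theorem even_induction {P : ℕ → Prop} (zero : P 0)
    (step : ∀ R m, 1 ≤ R → m < 2 ^ (R - 1) → Sparse m → Even m → P m → P (2 ^ R + m))
    (n : ℕ) (hs : Sparse n) (he : Even n) : P n := by
  induction n using Nat.strong_induction_on with
  | _ n ih =>
    rcases eq_or_ne n 0 with rfl | hn
    · exact zero
    obtain ⟨R, m, hm, rfl⟩ := exists_eq_two_pow_add hn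
    have hR : R ≠ 0 := by
      rintro rfl
      simp at hm
      simp [hm] at he
    have hme : Even m := (Nat.even_add.mp he).mp (Nat.even_pow.mpr ⟨even_two, hR⟩)
    exact step R m (Nat.one_le_iff_ne_zero.mpr hR) (hs.lt_two_pow_pred hm) (hs.of_two_pow_add hm)
      hme (ih m (by omega) (hs.of_two_pow_add hm) hme)

lemma two_mul_card_binSet_le {n : ℕ} (hs : Sparse n) (he : Even n) :
    2 * (binSet n).card ≤ n := by
  refine even_induction (P := fun k => 2 * (binSet k).card ≤ k) (by simp [binSet])
    (fun R m hR hm _ _ ih => ?_) n hs he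
  have hmR : m < 2 ^ R := hm.trans_le (Nat.pow_le_pow_right two_pos (R.sub_le 1))
  have h2R : 2 ≤ 2 ^ R := Nat.le_self_pow (by omega) 2
  rw [card_binSet_two_pow_add hmR]
  omega

end Sparse

theorem stmt_9_general (a₂ : ℕ → ℕ)
    (h0 : a₂ 0 = 0)
    (hrec1 : ∀ R m, 1 ≤ R → m < 2 ^ (R - 1) →
      a₂ (2 ^ R + m) = 2 ^ R * a₂ m + Nat.choose (2 ^ (R - 1)) 2 * aOdd m)
    (n : ℕ) (hs : Sparse n) (he : Even n) :
    8 * a₂ n = aOdd n * (n - 2 * (binSet n).card) := by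
  refine Sparse.even_induction (P := fun k => 8 * a₂ k = aOdd k * (k - 2 * (binSet k).card))
    (by simp [h0]) (fun R m hR hm hms hme ih => ?_) n hs he
  have hpow : 2 ^ R = 2 * 2 ^ (R - 1) := by rw [← pow_succ', Nat.sub_add_cancel hR]
  have hmR : m < 2 ^ R := by omega
  rw [hrec1 R m hR hm, aOdd_two_pow_add hmR, card_binSet_two_pow_add hmR, hpow]
  have hcard := hms.two_mul_card_binSet_le hme
  set x := 2 ^ (R - 1)
  have hchoose : x.choose 2 * 2 = x * (x - 1) := by
    rw [Nat.choose_two_right, Nat.div_two_mul_two_of_even (Nat.even_mul_pred_self x)]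
  have hx : 1 ≤ x := Nat.one_le_two_pow
  zify [hcard, hx, (by omega : 2 * ((binSet m).card + 1) ≤ 2 * x + m)] at ih hchoose ⊢
  linear_combination 2 * (x : ℤ) * ih + 4 * (aOdd m : ℤ) * hchoose

/-- If `a₂ : ℕ → ℕ` satisfies `a₂(0) = a₂(1) = 0` and the recursion of
Theorem 1.1, then for every sparse even `n` we have the closed form
`a₂(n) = (a(n)/8)·(n - 2ν(n))`, stated in the cleared-denominator form
`8·a₂(n) = a(n)·(n - 2ν(n))`. -/
theorem stmt_9 (a₂ : ℕ → ℕ)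
    (h0 : a₂ 0 = 0) (h1 : a₂ 1 = 0)
    (hrec1 : ∀ R m, 1 ≤ R → m < 2 ^ (R - 1) →
      a₂ (2 ^ R + m) = 2 ^ R * a₂ m + Nat.choose (2 ^ (R - 1)) 2 * aOdd m)
    (hrec2 : ∀ R m, 1 ≤ R → 2 ^ (R - 1) ≤ m → m < 2 ^ R →
      a₂ (2 ^ R + m) =
        2 ^ R * a₂ m + (Nat.choose (2 ^ (R - 1)) 3 + 2 ^ (R - 1)) * aOdd m / 2 ^ (R - 1))
    (n : ℕ) (hs : Sparse n) (he : Even n) :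
    8 * a₂ n = aOdd n * (n - 2 * (binSet n).card) :=
  stmt_9_general a₂ h0 hrec1 n hs he
end

section
/- Suppose n has binary digits (b_i) and (z_i)_{i≥0} is a sequence of non-negative integers with z_0 = 0 satisfying w_i + z_i = b_i + 2z_{i+1} for all i ≥ 0, where (w_i) are non-negative integers with finite support and Σ w_i = Σ b_i + 1. Then there is exactly one index R > 0 with z_R = 1 and z_i = 0 for all other i; moreover for this R, b_R = 1, w_R = 0, w_{R-1} = b_{R-1} + 2, and w_i = b_i for all i ∉ {R-1, R}. -/
/-!
Summing the carry relation `w i + z i = bit n i + 2 * z (i + 1)` over all `i`, and reindexing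
`∑ z (i + 1) = ∑ z i` (possible because `z 0 = 0`), gives `∑ w = ∑ bit n + ∑ z`, so `∑ z = 1`:
`z` is the indicator of a single index `R`, and `R > 0` since `z 0 = 0`. Reading the relation
at `R`, at `R - 1` and elsewhere gives the values of `w`; at `R` it forces `bit n R = 1`
because binary digits are at most `1`.
-/

/-- The `i`-th binary digit of `n`, as `0` or `1`. -/
def bit (n i : ℕ) : ℕ := if n.testBit i then 1 else 0

lemma bit_le_one (n i : ℕ) : bit n i ≤ 1 := by
  unfold bit
  split <;> omega

lemma support_bit_finite (n : ℕ) : (Function.support (bit n)).Finite := by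
  refine (Set.finite_Iio n).subset fun i hi => ?_
  by_contra hni
  have hlt : n < 2 ^ i :=
    Nat.lt_two_pow_self.trans_le (Nat.pow_le_pow_right two_pos (not_lt.mp hni))
  exact hi (by simp [bit, Nat.testBit_lt_two_pow hlt])

lemma finsum_comp_succ {M : Type*} [AddCommMonoid M] {f : ℕ → M} (hf0 : f 0 = 0) :
    ∑ᶠ i, f (i + 1) = ∑ᶠ i, f i := by
  rw [← finsum_mem_range Nat.succ_injective, ← finsum_mem_univ f]
  refine finsum_mem_inter_support_eq' f _ _ fun i hi => ?_
  have hi0 : i ≠ 0 := by rintro rfl; exact hi hf0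
  simpa using Nat.exists_eq_succ_of_ne_zero hi0

lemma exists_eq_pi_single_of_finsum_eq_one {α : Type*} [DecidableEq α] {f : α → ℕ}
    (h : ∑ᶠ i, f i = 1) : ∃ a, f = Pi.single a 1 := by
  have hf := hasFiniteSupport_of_finsum_eq_one h
  rw [finsum_eq_sum f hf] at h
  obtain ⟨a, ha⟩ := (Finsupp.sum_eq_one_iff (Finsupp.ofSupportFinite f hf)).mp h
  exact ⟨a, by rw [← Finsupp.single_eq_pi_single, ← ha]; rfl⟩

lemma finsum_eq_finsum_add_finsum_of_carry {w b z : ℕ → ℕ} (hw : (Function.support w).Finite)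
    (hb : (Function.support b).Finite) (hz : (Function.support z).Finite) (hz0 : z 0 = 0)
    (hrec : ∀ i, w i + z i = b i + 2 * z (i + 1)) :
    ∑ᶠ i, w i = ∑ᶠ i, b i + ∑ᶠ i, z i := by
  have hz_succ : (Function.support fun i => 2 * z (i + 1)).Finite :=
    (hz.preimage Nat.succ_injective.injOn).subset (Function.support_mul_subset_right _ _)
  have hsum := congrArg (fun f : ℕ → ℕ => ∑ᶠ i, f i) (funext hrec)
  simp only [finsum_add_distrib hw hz, finsum_add_distrib hb hz_succ, ← mul_finsum,
    finsum_comp_succ (f := z) hz0] at hsum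
  omega

/-- Combinatorial core of Proposition 3.1: if `(w_i)`, `(z_i)` are finitely
supported sequences of non-negative integers with `z_0 = 0`,
`w_i + z_i = b_i + 2z_{i+1}` for all `i` (where `b_i` are the binary digits
of `n`), and `Σ w_i = Σ b_i + 1`, then there is a unique index `R > 0` with
`z_R = 1` and `z_i = 0` otherwise; moreover `b_R = 1`, `w_R = 0`,
`w_{R-1} = b_{R-1} + 2`, and `w_i = b_i` for all `i ∉ {R-1, R}`. -/
theorem stmt_14 (n : ℕ) (w z : ℕ → ℕ)
    (hw : (Function.support w).Finite) (hz : (Function.support z).Finite)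
    (hz0 : z 0 = 0)
    (hrec : ∀ i, w i + z i = bit n i + 2 * z (i + 1))
    (hsum : ∑ᶠ i, w i = (∑ᶠ i, bit n i) + 1) :
    ∃ R, 0 < R ∧ z R = 1 ∧ (∀ i, i ≠ R → z i = 0) ∧
      bit n R = 1 ∧ w R = 0 ∧ w (R - 1) = bit n (R - 1) + 2 ∧
      ∀ i, i ≠ R → i ≠ R - 1 → w i = bit n i := by
  have hz_sum : ∑ᶠ i, z i = 1 := by
    have := finsum_eq_finsum_add_finsum_of_carry hw (support_bit_finite n) hz hz0 hrec
    omega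
  obtain ⟨R, rfl⟩ := exists_eq_pi_single_of_finsum_eq_one hz_sum
  have hR : 0 < R := Nat.pos_of_ne_zero fun hR => by simp [hR] at hz0
  have hzR : ∀ i, Pi.single R 1 i = if i = R then 1 else 0 := fun i => Pi.single_apply R 1 i
  refine ⟨R, hR, by simp, fun i hi => by simp [hi], ?_⟩
  have hrec_R := hrec R
  have hrec_pred := hrec (R - 1)
  simp only [hzR, Nat.sub_add_cancel hR, if_true, show R + 1 ≠ R by omega,
    show R - 1 ≠ R by omega, if_false] at hrec_R hrec_pred
  have := bit_le_one n R
  refine ⟨by omega, by omega, by omega, fun i hiR hiR' => ?_⟩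
  have hrec_i := hrec i
  simp only [hzR, hiR, show i + 1 ≠ R by omega, if_false] at hrec_i
  omega
end

section
/- Suppose n has binary digits (b_i), and (w_i), (z_i) are sequences of non-negative integers with finite support, z_0 = 0, satisfying w_i + z_i = b_i + 2z_{i+1} for all i ≥ 0. If Σ w_i = Σ b_i, then w_i = b_i and z_i = 0 for all i. -/
theorem finsum_nat_eq_add_finsum_succ {M : Type*} [AddCommMonoid M] {f : ℕ → M}
    (hf : f.support.Finite) : ∑ᶠ i, f i = f 0 + ∑ᶠ i, f (i + 1) := by
  rw [← add_finsum_cond_ne 0 hf, ← finsum_mem_range Nat.succ_injective, Nat.range_succ]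
  simp only [Set.mem_ofPred_eq, Nat.pos_iff_ne_zero]

theorem bit_support_finite (n : ℕ) : (bit n).support.Finite := by
  refine (Set.finite_Iio n).subset fun i hi => ?_
  by_contra hni
  have hn : n < 2 ^ i :=
    Nat.lt_two_pow_self.trans_le (Nat.pow_le_pow_right two_pos (not_lt.mp hni))
  exact hi (by simp [bit, Nat.testBit_lt_two_pow hn])

theorem finsum_add_finsum_eq_of_carry {w z b : ℕ → ℕ} (k : ℕ) (hw : w.support.Finite)
    (hz : z.support.Finite) (hb : b.support.Finite) (hz0 : z 0 = 0)
    (hrec : ∀ i, w i + z i = b i + k * z (i + 1)) :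
    ∑ᶠ i, w i + ∑ᶠ i, z i = ∑ᶠ i, b i + k * ∑ᶠ i, z i := by
  have hz_succ : (fun i => z (i + 1)).support.Finite := hz.preimage Nat.succ_injective.injOn
  calc ∑ᶠ i, w i + ∑ᶠ i, z i = ∑ᶠ i, (w i + z i) := (finsum_add_distrib hw hz).symm
    _ = ∑ᶠ i, (b i + k * z (i + 1)) := finsum_congr hrec
    _ = ∑ᶠ i, b i + k * ∑ᶠ i, z (i + 1) := by
      rw [finsum_add_distrib hb (hz_succ.subset (Function.support_mul_subset_right _ _)),
        mul_finsum' _ _ hz_succ]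
    _ = ∑ᶠ i, b i + k * ∑ᶠ i, z i := by
      rw [finsum_nat_eq_add_finsum_succ hz, hz0, zero_add]

/-- Combinatorial core of Macdonald's characterization of odd partitions:
if `(w_i)`, `(z_i)` are finitely supported sequences of non-negative
integers with `z_0 = 0` and `w_i + z_i = b_i + 2z_{i+1}` for all `i`
(`b_i` the binary digits of `n`), and `Σ w_i = Σ b_i`, then `w_i = b_i`
and `z_i = 0` for all `i`. -/
theorem stmt_15 (n : ℕ) (w z : ℕ → ℕ)
    (hw : (Function.support w).Finite) (hz : (Function.support z).Finite)
    (hz0 : z 0 = 0)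
    (hrec : ∀ i, w i + z i = bit n i + 2 * z (i + 1))
    (hsum : ∑ᶠ i, w i = ∑ᶠ i, bit n i) :
    ∀ i, w i = bit n i ∧ z i = 0 := by
  have hbalance := finsum_add_finsum_eq_of_carry 2 hw hz (bit_support_finite n) hz0 hrec
  have hz_sum : ∑ᶠ i, z i = 0 := by omega
  have hz_zero (i : ℕ) : z i = 0 :=
    Nat.eq_zero_of_le_zero (hz_sum ▸ single_le_finsum i hz fun j => Nat.zero_le (z j))
  intro i
  have hrec_i := hrec i
  rw [hz_zero i, hz_zero (i + 1)] at hrec_i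
  exact ⟨by omega, hz_zero i⟩
end
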